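/- Let E₁ and E₂ be ensembles of pure states on H_A⊗H_B whose 2k-th moments satisfy (1−ε)·E_{Ψ~E₁}[(|Ψ⟩⟨Ψ|)^{⊗2k}] ⪯ E_{Ψ~E₂}[(|Ψ⟩⟨Ψ|)^{⊗2k}] ⪯ (1+ε)·E_{Ψ~E₁}[(|Ψ⟩⟨Ψ|)^{⊗2k}] for some ε ≥ 0. Fix an orthonormal basis {|z⟩}_{z=1}^{D_B} of H_B and weights q_z > 0, and define ρ̃^{(k)}(Ψ) = Σ_z q_z^{1−k}·[(I_A⊗⟨z|)|Ψ⟩⟨Ψ|(I_A⊗|z⟩)]^{⊗k}. Then for any fixed positive semidefinite operator M on H_A^{⊗k}: |E_{Ψ~E₁}‖ρ̃^{(k)}(Ψ) − M‖₂² − E_{Ψ~E₂}‖ρ̃^{(k)}(Ψ) − M‖₂²| ≤ ε·E_{Ψ~E₁}[ 2·Tr(ρ̃^{(k)}(Ψ)·M) + (Σ_z q_z^{1−k}·⟨Ψ|(I_A⊗|z⟩⟨z|)|Ψ⟩^k)² ]. -/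

import Mathlib

open MeasureTheory Matrix
open scoped ComplexOrder

noncomputable section

instance matrixMeasurableSpace {m n : Type*} : MeasurableSpace (Matrix m n ℂ) :=
  inferInstanceAs (MeasurableSpace (m → n → ℂ))

/-- The squared norm `⟨φ|φ⟩` of a vector. -/
def nsq {ι : Type*} [Fintype ι] (φ : ι → ℂ) : ℂ := star φ ⬝ᵥ φ

/-- The quadratic form `⟨φ|σ|φ⟩`. -/
def qForm {ι : Type*} [Fintype ι] (σ : Matrix ι ι ℂ) (φ : ι → ℂ) : ℂ :=
  star φ ⬝ᵥ σ.mulVec φ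

/-- The rank-one projector `|ψ⟩⟨ψ|`. -/
def proj {ι : Type*} (ψ : ι → ℂ) : Matrix ι ι ℂ := Matrix.vecMulVec ψ (star ψ)

/-- The `k`-fold tensor (Kronecker) power of a matrix. -/
def tpow {ι : Type*} (k : ℕ) (A : Matrix ι ι ℂ) : Matrix (Fin k → ι) (Fin k → ι) ℂ :=
  Matrix.of fun r c => ∏ i, A (r i) (c i)

/-- The `k`-fold tensor power of a vector. -/
def vpow {ι : Type*} (k : ℕ) (ψ : ι → ℂ) : (Fin k → ι) → ℂ := fun r => ∏ i, ψ (r i)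

/-- The permutation operator `π̂` on the `k`-fold tensor power. -/
def permOp (ι : Type*) [DecidableEq ι] (k : ℕ) (π : Equiv.Perm (Fin k)) :
    Matrix (Fin k → ι) (Fin k → ι) ℂ :=
  Matrix.of fun r c => if ∀ i, r i = c (π i) then 1 else 0

/-- The dimension `binom (D + k - 1) k` of the symmetric subspace. -/
def symDim (D k : ℕ) : ℕ := Nat.choose (D + k - 1) k

/-- The `k`-th moment `ρ_Haar^(k) = P_sym^(k) / D_k` of the Haar ensemble. -/
def haarMoment (ι : Type*) [Fintype ι] [DecidableEq ι] (k : ℕ) :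
    Matrix (Fin k → ι) (Fin k → ι) ℂ :=
  ((k.factorial : ℂ) * (symDim (Fintype.card ι) k : ℂ))⁻¹ •
    ∑ π : Equiv.Perm (Fin k), permOp ι k π

/-- The singular values of a matrix. -/
def singVals {ι : Type*} [Fintype ι] [DecidableEq ι] (A : Matrix ι ι ℂ) : ι → ℝ := fun i =>
  Real.sqrt ((Matrix.isHermitian_conjTranspose_mul_self A).eigenvalues i)

/-- The trace (Schatten 1-) norm. -/
def traceNorm {ι : Type*} [Fintype ι] [DecidableEq ι] (A : Matrix ι ι ℂ) : ℝ :=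
  ∑ i, singVals A i

/-- The Schatten `p`-norm. -/
def schatten {ι : Type*} [Fintype ι] [DecidableEq ι] (p : ℝ) (A : Matrix ι ι ℂ) : ℝ :=
  (∑ i, singVals A i ^ p) ^ (1 / p)

/-- The Schatten `∞` (operator) norm. -/
def schattenInf {ι : Type*} [Fintype ι] [DecidableEq ι] (A : Matrix ι ι ℂ) : ℝ :=
  ⨆ i, singVals A i

open Classical in
/-- The positive-semidefinite square root (with junk value `0` off the PSD cone). -/
def msqrt {ι : Type*} [Fintype ι] [DecidableEq ι] (σ : Matrix ι ι ℂ) : Matrix ι ι ℂ :=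
  if h : σ.PosSemidef then
    (h.1.eigenvectorUnitary : Matrix ι ι ℂ) *
      Matrix.diagonal (fun i => ((Real.sqrt (h.1.eigenvalues i) : ℝ) : ℂ)) *
      (star (h.1.eigenvectorUnitary : Matrix ι ι ℂ))
  else 0

/-- `μ` is the Haar (i.e. unitarily invariant) probability measure on the unit sphere. -/
structure IsHaarSphere {ι : Type*} [Fintype ι] [DecidableEq ι] (μ : Measure (ι → ℂ)) :
    Prop where
  prob : IsProbabilityMeasure μ
  sphere : μ {φ | nsq φ = 1} = 1
  invar : ∀ U : Matrix ι ι ℂ, U ∈ Matrix.unitaryGroup ι ℂ →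
    Measure.map (fun φ => U.mulVec φ) μ = μ

/-- `τ` is the Haar probability measure on the unitary group. -/
structure IsHaarUnitary {ι : Type*} [Fintype ι] [DecidableEq ι]
    (τ : Measure (Matrix ι ι ℂ)) : Prop where
  prob : IsProbabilityMeasure τ
  unitary : τ {U | U ∈ Matrix.unitaryGroup ι ℂ} = 1
  invar : ∀ V ∈ Matrix.unitaryGroup ι ℂ, Measure.map (fun U => V * U) τ = τ

/-- The `k`-th moment `ρ_Scrooge^(k)(σ)` of the Scrooge ensemble `Scrooge(σ)`,
where `μ` is the Haar measure on the unit sphere. -/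
def scroogeMoment {ι : Type*} [Fintype ι] [DecidableEq ι] (k : ℕ) (σ : Matrix ι ι ℂ)
    (μ : Measure (ι → ℂ)) : Matrix (Fin k → ι) (Fin k → ι) ℂ :=
  Matrix.of fun r c =>
    (Fintype.card ι : ℂ) *
      ∫ φ, tpow k (msqrt σ * proj φ * msqrt σ) r c / qForm σ φ ^ (k - 1) ∂μ

/-- The `k`-th moment of an ensemble of pure states described by a measure `ν` on vectors. -/
def ensMoment {ι : Type*} [Fintype ι] [DecidableEq ι] (k : ℕ) (ν : Measure (ι → ℂ)) :
    Matrix (Fin k → ι) (Fin k → ι) ℂ :=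
  Matrix.of fun r c => ∫ ψ, tpow k (proj ψ) r c ∂ν

/-- An orthonormal family of vectors. -/
def OrthonormalFam {κ ι : Type*} [Fintype ι] [DecidableEq κ] (e : κ → (ι → ℂ)) : Prop :=
  ∀ i j, star (e i) ⬝ᵥ e j = (if i = j then (1 : ℂ) else 0)

/-- The (unnormalized) conditional vector `(I_A ⊗ ⟨z|)|Ψ⟩`. -/
def projVec {ιA ιB : Type*} [Fintype ιB] (z : ιB → ℂ) (Ψ : ιA × ιB → ℂ) : ιA → ℂ :=
  fun a => ∑ b, star (z b) * Ψ (a, b)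

/-- The `k`-th moment `ρ_E^(k)(Ψ)` of the projected ensemble of `Ψ`, obtained by
measuring subsystem `B` in the orthonormal basis `e` (terms with vanishing outcome
probability give `0`, by the `0⁻¹ = 0` convention). -/
def projMoment {ιA ιB : Type*} [Fintype ιA] [Fintype ιB] (k : ℕ) (e : ιB → (ιB → ℂ))
    (Ψ : ιA × ιB → ℂ) : Matrix (Fin k → ιA) (Fin k → ιA) ℂ :=
  ∑ z, (nsq (projVec (e z) Ψ) ^ (k - 1))⁻¹ • tpow k (proj (projVec (e z) Ψ))

/-- Partial trace over `A`. -/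
def ptraceA {ιA ιB : Type*} [Fintype ιA] (σ : Matrix (ιA × ιB) (ιA × ιB) ℂ) :
    Matrix ιB ιB ℂ :=
  Matrix.of fun b b' => ∑ a, σ (a, b) (a, b')

/-- Partial trace over `B`. -/
def ptraceB {ιA ιB : Type*} [Fintype ιB] (σ : Matrix (ιA × ιB) (ιA × ιB) ℂ) :
    Matrix ιA ιA ℂ :=
  Matrix.of fun a a' => ∑ b, σ (a, b) (a', b)

/-- The (unnormalized) conditional operator `σ_{A|z} = (I_A ⊗ ⟨z|) σ (I_A ⊗ |z⟩)`. -/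
def condA {ιA ιB : Type*} [Fintype ιB] (σ : Matrix (ιA × ιB) (ιA × ιB) ℂ) (z : ιB → ℂ) :
    Matrix ιA ιA ℂ :=
  Matrix.of fun a a' => ∑ b, ∑ b', star (z b) * σ (a, b) (a', b') * z b'

/-- The normalized conditional state `σ̂_{A|z} = σ_{A|z} / ⟨z|σ_B|z⟩`. -/
def condAhat {ιA ιB : Type*} [Fintype ιA] [Fintype ιB]
    (σ : Matrix (ιA × ιB) (ιA × ιB) ℂ) (z : ιB → ℂ) : Matrix ιA ιA ℂ :=
  (qForm (ptraceA σ) z)⁻¹ • condA σ z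

/-- Normalization of a vector. -/
def normalize' {ι : Type*} [Fintype ι] (ψ : ι → ℂ) : ι → ℂ :=
  (Real.sqrt (nsq ψ).re)⁻¹ • ψ

/-- `(I_A ⊗ U)|Ψ⟩`. -/
def applyB {ιA ιB : Type*} [Fintype ιB] (U : Matrix ιB ιB ℂ) (Ψ : ιA × ιB → ℂ) :
    ιA × ιB → ℂ :=
  fun p => ∑ b', U p.2 b' * Ψ (p.1, b')

/-- Partial trace over the `A` factors of an operator on `(H_A ⊗ H_B)^{⊗k}`. -/
def ptraceAk {ιA ιB : Type*} [Fintype ιA] (k : ℕ)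
    (T : Matrix (Fin k → ιA × ιB) (Fin k → ιA × ιB) ℂ) :
    Matrix (Fin k → ιB) (Fin k → ιB) ℂ :=
  Matrix.of fun r c => ∑ g : Fin k → ιA, T (fun i => (g i, r i)) (fun i => (g i, c i))

/-- The uniform probability measure on `[0, 2π)^J`. -/
def phaseMeasure (J : Type*) [Fintype J] : Measure (J → ℝ) :=
  Measure.pi fun _ =>
    (ENNReal.ofReal (2 * Real.pi))⁻¹ • volume.restrict (Set.Ico 0 (2 * Real.pi))

/-- `γ` is a mean-zero (circularly symmetric) complex Gaussian distribution. -/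
def IsCplxGaussian (γ : Measure ℂ) : Prop :=
  ∃ v : NNReal, v ≠ 0 ∧
    γ = Measure.map (fun p : ℝ × ℝ => (⟨p.1, p.2⟩ : ℂ))
      ((ProbabilityTheory.gaussianReal 0 v).prod (ProbabilityTheory.gaussianReal 0 v))


set_option linter.unusedSectionVars false
set_option maxHeartbeats 1000000

namespace St8
section A
variable {ι κ α β : Type*} [Fintype ι] [Fintype κ] [Fintype α] [Fintype β]


variable {ι κ α β : Type*} [Fintype ι] [Fintype κ] [Fintype α] [Fintype β]

lemma nsq_eq (φ : ι → ℂ) : nsq φ = ((∑ x, Complex.normSq (φ x) : ℝ) : ℂ) := by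
  simp only [nsq, dotProduct, Pi.star_apply, Complex.ofReal_sum]
  exact Finset.sum_congr rfl fun x _ => by
    rw [RCLike.star_def, mul_comm, Complex.mul_conj]

lemma tpow_proj (m : ℕ) (ψ : ι → ℂ) : tpow m (proj ψ) = proj (vpow m ψ) := by
  ext r c
  simp only [tpow, proj, Matrix.of_apply, Matrix.vecMulVec_apply, vpow, Pi.star_apply]
  rw [star_prod, ← Finset.prod_mul_distrib]

lemma trace_proj_mul (v : ι → ℂ) (K : Matrix ι ι ℂ) :
    (proj v * K).trace = star v ⬝ᵥ K *ᵥ v := by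
  simp only [Matrix.trace, Matrix.diag, Matrix.mul_apply, proj, Matrix.vecMulVec_apply,
    dotProduct, Matrix.mulVec, Pi.star_apply]
  rw [Finset.sum_comm]
  exact Finset.sum_congr rfl fun c _ => by
    rw [Finset.mul_sum]; exact Finset.sum_congr rfl fun r _ => by ring

lemma dot_conj_form (G : Matrix κ ι ℂ) (P : Matrix κ κ ℂ) (w : ι → ℂ) :
    star w ⬝ᵥ (Gᴴ * P * G) *ᵥ w = star (G *ᵥ w) ⬝ᵥ P *ᵥ (G *ᵥ w) := by
  rw [← Matrix.mulVec_mulVec, ← Matrix.mulVec_mulVec, Matrix.dotProduct_mulVec,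
    ← Matrix.star_mulVec]

lemma trace_proj_conj (G : Matrix κ ι ℂ) (P : Matrix κ κ ℂ) (w : ι → ℂ) :
    (proj w * (Gᴴ * P * G)).trace = star (G *ᵥ w) ⬝ᵥ P *ᵥ (G *ᵥ w) := by
  rw [trace_proj_mul, dot_conj_form]

lemma dot_tensor (f f' : α → ℂ) (g g' : β → ℂ) :
    star (fun p : α × β => f p.1 * g p.2) ⬝ᵥ (fun p : α × β => f' p.1 * g' p.2)
      = (star f ⬝ᵥ f') * (star g ⬝ᵥ g') := by
  simp only [dotProduct, Pi.star_apply, Fintype.sum_prod_type, Finset.sum_mul_sum]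
  exact Finset.sum_congr rfl fun a _ => Finset.sum_congr rfl fun b _ => by
    simp only [star_mul']
    ring

lemma dot_vpow (m : ℕ) (a b : ι → ℂ) :
    star (vpow m a) ⬝ᵥ vpow m b = (star a ⬝ᵥ b) ^ m := by
  simp only [dotProduct, Pi.star_apply, vpow]
  rw [Fintype.sum_pow (fun x => star (a x) * b x) m]
  exact Finset.sum_congr rfl fun r _ => by
    rw [star_prod, ← Finset.prod_mul_distrib]

lemma psd_trace_nonneg {A : Matrix ι ι ℂ} (hA : A.PosSemidef) : 0 ≤ A.trace := by
  classical
  apply Finset.sum_nonneg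
  intro i _
  have := hA.dotProduct_mulVec_nonneg (Pi.single i 1)
  simpa [dotProduct, Matrix.mulVec, Pi.single_apply, Finset.sum_ite_eq,
    Matrix.diag] using this

open scoped MatrixOrder in
lemma psd_mul_trace_re_nonneg {A K : Matrix ι ι ℂ} [DecidableEq ι]
    (hA : A.PosSemidef) (hK : K.PosSemidef) : 0 ≤ ((A * K).trace).re := by
  obtain ⟨B, hB⟩ : ∃ B : Matrix ι ι ℂ, A = Bᴴ * B := by
    obtain ⟨X, hX, -, hXA⟩ := CFC.exists_sqrt_of_isSelfAdjoint_of_quasispectrumRestricts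
      hA.isHermitian (QuasispectrumRestricts.nnreal_of_nonneg hA.nonneg)
    exact ⟨X, by rw [← hXA]; exact congrArg (· * X) hX.star_eq.symm⟩
  have h1 : (A * K).trace = (B * K * Bᴴ).trace := by
    rw [hB, Matrix.mul_assoc, Matrix.trace_mul_cycle, ← Matrix.mul_assoc]
  have h2 : (0 : ℂ) ≤ (B * K * Bᴴ).trace := psd_trace_nonneg (hK.mul_mul_conjTranspose_same B)
  rw [h1]
  exact (Complex.le_def.mp h2).1

lemma posSemidef_sum {s : Finset α} {f : α → Matrix ι ι ℂ}
    (h : ∀ z ∈ s, (f z).PosSemidef) : (∑ z ∈ s, f z).PosSemidef := by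
  classical
  induction s using Finset.induction with
  | empty => simpa using Matrix.PosSemidef.zero
  | insert _ _ hz ih =>
    rename_i z s
    rw [Finset.sum_insert hz]
    exact (h z (Finset.mem_insert_self z s)).add (ih fun w hw => h w (Finset.mem_insert_of_mem hw))

lemma posSemidef_ofReal_smul {A : Matrix ι ι ℂ} (hA : A.PosSemidef) {c : ℝ} (hc : 0 ≤ c) :
    (((c : ℂ)) • A).PosSemidef := by
  refine Matrix.PosSemidef.of_dotProduct_mulVec_nonneg ?_ ?_
  · unfold Matrix.IsHermitian
    rw [Matrix.conjTranspose_smul, hA.1]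
    congr 1
    simp
  · intro x
    rw [Matrix.smul_mulVec, dotProduct_smul]
    exact mul_nonneg (by exact_mod_cast hc) (hA.dotProduct_mulVec_nonneg x)

lemma trace_eq_sum_eigenvalues {A : Matrix ι ι ℂ} [DecidableEq ι] (hA : A.IsHermitian) :
    A.trace = ((∑ i, hA.eigenvalues i : ℝ) : ℂ) := by
  rw [hA.trace_eq_sum_eigenvalues]
  simp

lemma schatten_two_sq [DecidableEq ι] (A : Matrix ι ι ℂ) :
    schatten 2 A ^ 2 = ((Aᴴ * A).trace).re := by
  have hpsd := Matrix.posSemidef_conjTranspose_mul_self A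
  have h1 : ∀ i, singVals A i ^ (2 : ℝ) = (Matrix.isHermitian_conjTranspose_mul_self A).eigenvalues i := by
    intro i
    rw [show (2:ℝ) = ((2:ℕ):ℝ) by norm_num, Real.rpow_natCast]
    exact Real.sq_sqrt (hpsd.eigenvalues_nonneg i)
  have h2 : (∑ i, singVals A i ^ (2:ℝ)) = ∑ i, (Matrix.isHermitian_conjTranspose_mul_self A).eigenvalues i := by
    exact Finset.sum_congr rfl fun i _ => h1 i
  have h3 : ((Aᴴ * A).trace).re = ∑ i, (Matrix.isHermitian_conjTranspose_mul_self A).eigenvalues i := by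
    rw [trace_eq_sum_eigenvalues (Matrix.isHermitian_conjTranspose_mul_self A)]
    simp
  have h4 : 0 ≤ ∑ i, (Matrix.isHermitian_conjTranspose_mul_self A).eigenvalues i :=
    Finset.sum_nonneg fun i _ => hpsd.eigenvalues_nonneg i
  rw [schatten, h2, h3]
  rw [← Real.rpow_natCast ((∑ i, (Matrix.isHermitian_conjTranspose_mul_self A).eigenvalues i) ^ (1/(2:ℝ))) 2,
    ← Real.rpow_mul h4]
  norm_num


lemma proj_mulVec (u x : ι → ℂ) : proj u *ᵥ x = (star u ⬝ᵥ x) • u := by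
  funext a
  simp only [proj, Matrix.mulVec, dotProduct, Matrix.vecMulVec_apply, Pi.star_apply,
    Pi.smul_apply, smul_eq_mul, Finset.sum_mul]
  exact Finset.sum_congr rfl fun c _ => by ring

lemma proj_conjTranspose (u : ι → ℂ) : (proj u)ᴴ = proj u := by
  ext a b
  simp [proj, Matrix.conjTranspose_apply, Matrix.vecMulVec_apply, mul_comm]

lemma nsq_ofReal_re (φ : ι → ℂ) : nsq φ = (((nsq φ).re : ℝ) : ℂ) := by
  rw [nsq_eq]; simp

end A
section B
variable {α β : Type*} [Fintype α] [Fintype β] [DecidableEq α] [DecidableEq β]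


variable {α β : Type*} [Fintype α] [Fintype β] [DecidableEq α] [DecidableEq β]

/-- `M ⊗ Id`. -/
def MIdK (M : Matrix α α ℂ) : Matrix (α × β) (α × β) ℂ :=
  fun p q => M p.1 q.1 * (if p.2 = q.2 then 1 else 0)

lemma MIdK_mulVec' (M : Matrix α α ℂ) (x : α × β → ℂ) (p : α × β) :
    ((MIdK M : Matrix (α × β) (α × β) ℂ) *ᵥ x) p = ∑ a', M p.1 a' * x (a', p.2) := by
  simp only [Matrix.mulVec, dotProduct, MIdK, Fintype.sum_prod_type]
  refine Finset.sum_congr rfl fun a' _ => ?_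
  simp [mul_ite, mul_one, mul_zero, ite_mul, zero_mul, Finset.sum_ite_eq]

lemma MIdK_mulVec (M : Matrix α α ℂ) (f : α → ℂ) (g : β → ℂ) :
    (MIdK M) *ᵥ (fun p : α × β => f p.1 * g p.2) = fun p => (M *ᵥ f) p.1 * g p.2 := by
  funext p
  rw [MIdK_mulVec']
  simp only [Matrix.mulVec, dotProduct, Finset.sum_mul]
  exact Finset.sum_congr rfl fun a' _ => by ring

lemma MIdK_posSemidef {M : Matrix α α ℂ} (hM : M.PosSemidef) :
    (MIdK M : Matrix (α × β) (α × β) ℂ).PosSemidef := by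
  refine Matrix.PosSemidef.of_dotProduct_mulVec_nonneg ?_ ?_
  · unfold Matrix.IsHermitian
    ext p q
    simp only [Matrix.conjTranspose_apply, MIdK]
    by_cases h : p.2 = q.2
    · rw [if_pos h.symm, if_pos h, mul_one, mul_one, ← Matrix.conjTranspose_apply, hM.1]
    · rw [if_neg (fun hh => h hh.symm), if_neg h, mul_zero, mul_zero, star_zero]
  · intro x
    have : star x ⬝ᵥ (MIdK M : Matrix (α × β) (α × β) ℂ) *ᵥ x
        = ∑ b : β, star (fun a => x (a, b)) ⬝ᵥ M *ᵥ (fun a => x (a, b)) := by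
      simp only [dotProduct, Pi.star_apply, MIdK_mulVec' M x]
      simp only [Matrix.mulVec, dotProduct, Fintype.sum_prod_type]
      rw [Finset.sum_comm]
    rw [this]
    exact Finset.sum_nonneg fun b _ => hM.dotProduct_mulVec_nonneg _

/-- The swap operator. -/
def Fswap (α : Type*) [DecidableEq α] : Matrix (α × α) (α × α) ℂ :=
  fun p q => if p.1 = q.2 ∧ p.2 = q.1 then 1 else 0

lemma Fswap_mulVec (f g : α → ℂ) :
    (Fswap α) *ᵥ (fun p : α × α => f p.1 * g p.2) = fun p => g p.1 * f p.2 := by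
  funext p
  simp only [Matrix.mulVec, dotProduct, Fswap, Fintype.sum_prod_type, ite_and, ite_mul,
    one_mul, zero_mul]
  simp [Finset.sum_ite_eq, mul_comm]

lemma Fswap_conjTranspose : (Fswap α)ᴴ = Fswap α := by
  ext p q
  simp only [Matrix.conjTranspose_apply, Fswap]
  rw [show (star (if q.1 = p.2 ∧ q.2 = p.1 then (1:ℂ) else 0))
      = (if q.1 = p.2 ∧ q.2 = p.1 then (1:ℂ) else 0) by split_ifs <;> simp]
  exact if_congr ⟨fun ⟨h1, h2⟩ => ⟨h2.symm, h1.symm⟩, fun ⟨h1, h2⟩ => ⟨h2.symm, h1.symm⟩⟩ rfl rfl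

lemma Fswap_mul_self : (Fswap α) * (Fswap α) = 1 := by
  ext p q
  simp only [Matrix.mul_apply, Fswap, Fintype.sum_prod_type, ite_and, ite_mul, one_mul, zero_mul]
  simp only [Finset.sum_ite_eq, Finset.mem_univ, if_true, Matrix.one_apply, Prod.ext_iff]
  by_cases h1 : p.1 = q.1 <;> by_cases h2 : p.2 = q.2 <;> simp [h1, h2]

def Ppos (α : Type*) [Fintype α] [DecidableEq α] : Matrix (α × α) (α × α) ℂ := (2:ℂ)⁻¹ • (1 + Fswap α)
def Pneg (α : Type*) [Fintype α] [DecidableEq α] : Matrix (α × α) (α × α) ℂ := (2:ℂ)⁻¹ • (1 - Fswap α)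

lemma Ppos_sub_Pneg : Ppos α - Pneg α = Fswap α := by
  rw [Ppos, Pneg, ← smul_sub]
  module

lemma Ppos_add_Pneg : Ppos α + Pneg α = 1 := by
  rw [Ppos, Pneg, ← smul_add]
  module

lemma Ppos_posSemidef : (Ppos α).PosSemidef := by
  have herm : (Ppos α)ᴴ = Ppos α := by
    rw [Ppos, Matrix.conjTranspose_smul, Matrix.conjTranspose_add, Matrix.conjTranspose_one,
      Fswap_conjTranspose]
    norm_num
  have idem : (Ppos α) * (Ppos α) = Ppos α := by
    rw [Ppos, Matrix.smul_mul, Matrix.mul_smul, Matrix.add_mul, Matrix.mul_add, Matrix.mul_add,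
      Matrix.one_mul, Matrix.mul_one, Fswap_mul_self, smul_smul]
    rw [Matrix.one_mul]
    module
  have := Matrix.posSemidef_conjTranspose_mul_self (Ppos α)
  rwa [herm, idem] at this

lemma Pneg_posSemidef : (Pneg α).PosSemidef := by
  have herm : (Pneg α)ᴴ = Pneg α := by
    rw [Pneg, Matrix.conjTranspose_smul, Matrix.conjTranspose_sub, Matrix.conjTranspose_one,
      Fswap_conjTranspose]
    norm_num
  have idem : (Pneg α) * (Pneg α) = Pneg α := by
    rw [Pneg, Matrix.smul_mul, Matrix.mul_smul, Matrix.sub_mul, Matrix.mul_sub, Matrix.mul_sub,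
      Matrix.one_mul, Matrix.mul_one, Fswap_mul_self, smul_smul]
    rw [Matrix.one_mul]
    module
  have := Matrix.posSemidef_conjTranspose_mul_self (Pneg α)
  rwa [herm, idem] at this


end B
section C


def lo (k : ℕ) (i : Fin k) : Fin (2 * k) := ⟨i.1, by have := i.2; omega⟩
def hi (k : ℕ) (i : Fin k) : Fin (2 * k) := ⟨k + i.1, by have := i.2; omega⟩

lemma prod_split {k : ℕ} (f : Fin (2 * k) → ℂ) :
    ∏ j, f j = (∏ i : Fin k, f (lo k i)) * ∏ i : Fin k, f (hi k i) := by
  rw [← (finCongr (two_mul k)).symm.prod_comp f]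
  rw [Fin.prod_univ_add (f := fun j => f ((finCongr (two_mul k)).symm j))]
  have h1 : ∀ i : Fin k, (finCongr (two_mul k)).symm (Fin.castAdd k i) = lo k i := fun i => by
    ext; simp [lo]
  have h2 : ∀ i : Fin k, (finCongr (two_mul k)).symm (Fin.natAdd k i) = hi k i := fun i => by
    ext; simp [hi]; omega
  simp only [h1, h2]

/-- factorization of a sum of split products over tuples -/
lemma sum_factor {k : ℕ} {n : Type*} [Fintype n] (f g : Fin k → n → ℂ) :
    ∑ r : Fin (2 * k) → n, (∏ i, f i (r (lo k i))) * (∏ i, g i (r (hi k i)))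
      = (∏ i, ∑ x, f i x) * (∏ i, ∑ x, g i x) := by
  classical
  set F : Fin (2 * k) → n → ℂ := fun j x =>
    if h : (j : ℕ) < k then f ⟨j, h⟩ x else g ⟨(j : ℕ) - k, by have := j.2; omega⟩ x with hF
  have hlo : ∀ (i : Fin k) (x : n), F (lo k i) x = f i x := by
    intro i x
    simp only [hF, lo]
    rw [dif_pos i.2]
  have hhi : ∀ (i : Fin k) (x : n), F (hi k i) x = g i x := by
    intro i x
    simp only [hF, hi]
    rw [dif_neg (by omega)]
    congr 1
    ext
    simp
  have h1 : ∀ r : Fin (2 * k) → n,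
      (∏ i, f i (r (lo k i))) * (∏ i, g i (r (hi k i))) = ∏ j, F j (r j) := by
    intro r
    rw [prod_split (fun j => F j (r j))]
    congr 1
    · exact Finset.prod_congr rfl fun i _ => (hlo i (r (lo k i))).symm
    · exact Finset.prod_congr rfl fun i _ => (hhi i (r (hi k i))).symm
  calc ∑ r : Fin (2 * k) → n, (∏ i, f i (r (lo k i))) * (∏ i, g i (r (hi k i)))
      = ∑ r : Fin (2 * k) → n, ∏ j, F j (r j) := Finset.sum_congr rfl fun r _ => h1 r
    _ = ∏ j, ∑ x, F j x := (Fintype.prod_sum F).symm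
    _ = (∏ i, ∑ x, f i x) * (∏ i, ∑ x, g i x) := by
        rw [prod_split (fun j => ∑ x, F j x)]
        congr 1
        · exact Finset.prod_congr rfl fun i _ => Finset.sum_congr rfl fun x _ => hlo i x
        · exact Finset.prod_congr rfl fun i _ => Finset.sum_congr rfl fun x _ => hhi i x


variable {DA DB k : ℕ}

/-- `Ã_z ⊗ Ã_{z'}` as one matrix from `(H_A⊗H_B)^{⊗2k}` to `H_A^{⊗k} ⊗ H_A^{⊗k}`. -/
def Gmat (DA DB k : ℕ) (e : Fin DB → Fin DB → ℂ) (z z' : Fin DB) :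
    Matrix ((Fin k → Fin DA) × (Fin k → Fin DA)) (Fin (2 * k) → Fin DA × Fin DB) ℂ :=
  fun p r =>
    (∏ i, if (r (lo k i)).1 = p.1 i then starRingEnd ℂ (e z ((r (lo k i)).2)) else 0) *
    (∏ i, if (r (hi k i)).1 = p.2 i then starRingEnd ℂ (e z' ((r (hi k i)).2)) else 0)

/-- `Ã_z ⊗ Id` as one matrix. -/
def Emat (DA DB k : ℕ) (e : Fin DB → Fin DB → ℂ) (z : Fin DB) :
    Matrix ((Fin k → Fin DA) × (Fin k → Fin DA × Fin DB)) (Fin (2 * k) → Fin DA × Fin DB) ℂ :=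
  fun p r =>
    (∏ i, if (r (lo k i)).1 = p.1 i then starRingEnd ℂ (e z ((r (lo k i)).2)) else 0) *
    (∏ i, if r (hi k i) = p.2 i then 1 else 0)

lemma Gmat_mulVec (e : Fin DB → Fin DB → ℂ) (z z' : Fin DB) (Ψ : Fin DA × Fin DB → ℂ) :
    Gmat DA DB k e z z' *ᵥ vpow (2 * k) Ψ
      = fun p => vpow k (projVec (e z) Ψ) p.1 * vpow k (projVec (e z') Ψ) p.2 := by
  funext p
  have key := sum_factor (k := k) (n := Fin DA × Fin DB)
    (fun i x => (if x.1 = p.1 i then starRingEnd ℂ (e z x.2) else 0) * Ψ x)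
    (fun i x => (if x.1 = p.2 i then starRingEnd ℂ (e z' x.2) else 0) * Ψ x)
  have h1 : ∀ r : Fin (2 * k) → Fin DA × Fin DB,
      Gmat DA DB k e z z' p r * vpow (2 * k) Ψ r
        = (∏ i, (if (r (lo k i)).1 = p.1 i then starRingEnd ℂ (e z ((r (lo k i)).2)) else 0)
            * Ψ (r (lo k i))) *
          ∏ i, (if (r (hi k i)).1 = p.2 i then starRingEnd ℂ (e z' ((r (hi k i)).2)) else 0)
            * Ψ (r (hi k i)) := by
    intro r
    rw [Gmat, vpow, prod_split (fun j => Ψ (r j)), Finset.prod_mul_distrib,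
      Finset.prod_mul_distrib]
    ring
  rw [Matrix.mulVec, dotProduct]
  calc ∑ r, Gmat DA DB k e z z' p r * vpow (2 * k) Ψ r
      = _ := Finset.sum_congr rfl fun r _ => h1 r
    _ = _ := key
    _ = vpow k (projVec (e z) Ψ) p.1 * vpow k (projVec (e z') Ψ) p.2 := by
        rw [vpow, vpow]
        congr 1
        · exact Finset.prod_congr rfl fun i _ => by
            rw [Fintype.sum_prod_type]
            simp [projVec, Finset.sum_ite_eq, RCLike.star_def]
        · exact Finset.prod_congr rfl fun i _ => by
            rw [Fintype.sum_prod_type]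
            simp [projVec, Finset.sum_ite_eq, RCLike.star_def]

lemma Emat_mulVec (e : Fin DB → Fin DB → ℂ) (z : Fin DB) (Ψ : Fin DA × Fin DB → ℂ) :
    Emat DA DB k e z *ᵥ vpow (2 * k) Ψ
      = fun p => vpow k (projVec (e z) Ψ) p.1 * vpow k Ψ p.2 := by
  funext p
  have key := sum_factor (k := k) (n := Fin DA × Fin DB)
    (fun i x => (if x.1 = p.1 i then starRingEnd ℂ (e z x.2) else 0) * Ψ x)
    (fun i x => (if x = p.2 i then (1:ℂ) else 0) * Ψ x)
  have h1 : ∀ r : Fin (2 * k) → Fin DA × Fin DB,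
      Emat DA DB k e z p r * vpow (2 * k) Ψ r
        = (∏ i, (if (r (lo k i)).1 = p.1 i then starRingEnd ℂ (e z ((r (lo k i)).2)) else 0)
            * Ψ (r (lo k i))) *
          ∏ i, (if r (hi k i) = p.2 i then (1:ℂ) else 0) * Ψ (r (hi k i)) := by
    intro r
    rw [Emat, vpow, prod_split (fun j => Ψ (r j)), Finset.prod_mul_distrib,
      Finset.prod_mul_distrib]
    ring
  rw [Matrix.mulVec, dotProduct]
  calc ∑ r, Emat DA DB k e z p r * vpow (2 * k) Ψ r
      = _ := Finset.sum_congr rfl fun r _ => h1 r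
    _ = _ := key
    _ = vpow k (projVec (e z) Ψ) p.1 * vpow k Ψ p.2 := by
        rw [vpow, vpow]
        congr 1
        · exact Finset.prod_congr rfl fun i _ => by
            rw [Fintype.sum_prod_type]
            simp [projVec, Finset.sum_ite_eq, RCLike.star_def]
        · exact Finset.prod_congr rfl fun i _ => by
            simp [Finset.sum_ite_eq]


end C
section D
variable {ι : Type*} [Fintype ι] [DecidableEq ι]


variable {ι : Type*} [Fintype ι] [DecidableEq ι]

lemma measurable_nsq : Measurable (nsq : (ι → ℂ) → ℂ) := by
  unfold nsq dotProduct
  exact Finset.measurable_sum _ fun x _ =>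
    ((continuous_star.measurable.comp (measurable_pi_apply x)).mul (measurable_pi_apply x))

lemma ae_sphere (ν : Measure (ι → ℂ)) [IsProbabilityMeasure ν]
    (hs : ν {Ψ | nsq Ψ = 1} = 1) : ∀ᵐ Ψ ∂ν, nsq Ψ = 1 := by
  have hm : MeasurableSet {Ψ : ι → ℂ | nsq Ψ = 1} :=
    measurable_nsq (measurableSet_singleton 1)
  rw [ae_iff]
  have : {Ψ : ι → ℂ | ¬ nsq Ψ = 1} = {Ψ : ι → ℂ | nsq Ψ = 1}ᶜ := rfl
  rw [this, (prob_compl_eq_zero_iff hm)]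
  exact hs

lemma coord_bound {Ψ : ι → ℂ} (h : nsq Ψ = 1) (x : ι) : ‖Ψ x‖ ≤ 1 := by
  have h1 : (∑ y, Complex.normSq (Ψ y) : ℝ) = 1 := by
    have := h
    rw [show nsq Ψ = ((∑ y, Complex.normSq (Ψ y) : ℝ) : ℂ) from ?_] at this
    · exact_mod_cast this
    · simp only [nsq, dotProduct, Pi.star_apply, Complex.ofReal_sum]
      exact Finset.sum_congr rfl fun y _ => by
        rw [RCLike.star_def, mul_comm, Complex.mul_conj]
  have h2 : Complex.normSq (Ψ x) ≤ 1 := by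
    rw [← h1]
    exact Finset.single_le_sum (fun y _ => Complex.normSq_nonneg _) (Finset.mem_univ x)
  rw [← Complex.sq_norm] at h2
  nlinarith [norm_nonneg (Ψ x)]

lemma tpow_entry_bound {m : ℕ} {Ψ : ι → ℂ} (h : nsq Ψ = 1) (r c : Fin m → ι) :
    ‖tpow m (proj Ψ) r c‖ ≤ 1 := by
  have : tpow m (proj Ψ) r c = ∏ i, Ψ (r i) * star (Ψ (c i)) := rfl
  rw [this, norm_prod]
  apply Finset.prod_le_one
  · intro i _; positivity
  · intro i _
    rw [norm_mul, norm_star]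
    exact mul_le_one₀ (coord_bound h (r i)) (norm_nonneg _) (coord_bound h (c i))

lemma measurable_tpow_entry {m : ℕ} (r c : Fin m → ι) :
    Measurable (fun Ψ : ι → ℂ => tpow m (proj Ψ) r c) := by
  have : (fun Ψ : ι → ℂ => tpow m (proj Ψ) r c)
      = fun Ψ => ∏ i, Ψ (r i) * star (Ψ (c i)) := rfl
  rw [this]
  exact Finset.measurable_prod _ fun i _ =>
    (measurable_pi_apply (r i)).mul (continuous_star.measurable.comp (measurable_pi_apply (c i)))

lemma integrable_tpow_entry_mul {m : ℕ} (ν : Measure (ι → ℂ)) [IsProbabilityMeasure ν]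
    (hs : ν {Ψ | nsq Ψ = 1} = 1) (r c : Fin m → ι) (a : ℂ) :
    Integrable (fun Ψ => tpow m (proj Ψ) r c * a) ν := by
  refine Integrable.mono' (integrable_const ‖a‖)
    ((measurable_tpow_entry r c).mul_const a).aestronglyMeasurable ?_
  filter_upwards [ae_sphere ν hs] with Ψ hΨ
  rw [norm_mul]
  calc ‖tpow m (proj Ψ) r c‖ * ‖a‖ ≤ 1 * ‖a‖ :=
        mul_le_mul_of_nonneg_right (tpow_entry_bound hΨ r c) (norm_nonneg _)
    _ = ‖a‖ := one_mul _

lemma trace_mul_expand {I : Type*} [Fintype I] (X K : Matrix I I ℂ) :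
    (X * K).trace = ∑ r, ∑ c, X r c * K c r := by
  simp [Matrix.trace, Matrix.diag, Matrix.mul_apply]

lemma integrable_trace_kernel {m : ℕ} (ν : Measure (ι → ℂ)) [IsProbabilityMeasure ν]
    (hs : ν {Ψ | nsq Ψ = 1} = 1) (K : Matrix (Fin m → ι) (Fin m → ι) ℂ) :
    Integrable (fun Ψ => (tpow m (proj Ψ) * K).trace) ν := by
  have : (fun Ψ => ((tpow m (proj Ψ)) * K).trace)
      = fun Ψ => ∑ r, ∑ c, tpow m (proj Ψ) r c * K c r := by
    funext Ψ; exact trace_mul_expand _ _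
  rw [this]
  exact integrable_finset_sum _ fun r _ => integrable_finset_sum _ fun c _ =>
    integrable_tpow_entry_mul ν hs r c _

lemma integrable_trace_kernel_re {m : ℕ} (ν : Measure (ι → ℂ)) [IsProbabilityMeasure ν]
    (hs : ν {Ψ | nsq Ψ = 1} = 1) (K : Matrix (Fin m → ι) (Fin m → ι) ℂ) :
    Integrable (fun Ψ => ((tpow m (proj Ψ) * K).trace).re) ν :=
  (integrable_trace_kernel ν hs K).re

lemma integral_trace_kernel {m : ℕ} (ν : Measure (ι → ℂ)) [IsProbabilityMeasure ν]
    (hs : ν {Ψ | nsq Ψ = 1} = 1) (K : Matrix (Fin m → ι) (Fin m → ι) ℂ) :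
    ∫ Ψ, ((tpow m (proj Ψ) * K).trace).re ∂ν = ((ensMoment m ν * K).trace).re := by
  have h0 : ∫ Ψ, ((tpow m (proj Ψ) * K).trace).re ∂ν
      = (∫ Ψ, (tpow m (proj Ψ) * K).trace ∂ν).re := by
    have := integral_re (μ := ν) (f := fun Ψ => (tpow m (proj Ψ) * K).trace)
      (integrable_trace_kernel ν hs K)
    simpa using this
  rw [h0]
  congr 1
  have h1 : (fun Ψ => ((tpow m (proj Ψ)) * K).trace)
      = fun Ψ => ∑ r, ∑ c, tpow m (proj Ψ) r c * K c r := by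
    funext Ψ; exact trace_mul_expand _ _
  rw [h1, trace_mul_expand]
  rw [integral_finset_sum _ fun r _ => integrable_finset_sum _ fun c _ =>
    integrable_tpow_entry_mul ν hs r c _]
  refine Finset.sum_congr rfl fun r _ => ?_
  rw [integral_finset_sum _ fun c _ => integrable_tpow_entry_mul ν hs r c _]
  refine Finset.sum_congr rfl fun c _ => ?_
  rw [integral_mul_const]
  rfl




lemma key_bound {I : Type*} [Fintype I] [DecidableEq I] {m₁ m₂ : Matrix I I ℂ}
    (K : Matrix I I ℂ) (hK : K.PosSemidef) {ε : ℝ}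
    (h1 : (m₂ - (1 - ε) • m₁).PosSemidef)
    (h2 : ((1 + ε) • m₁ - m₂).PosSemidef) :
    |((m₁ * K).trace).re - ((m₂ * K).trace).re| ≤ ε * ((m₁ * K).trace).re := by
  have e1 : ∀ (c : ℝ) (A B : Matrix I I ℂ), (((A - c • B) * K).trace).re
      = ((A * K).trace).re - c * ((B * K).trace).re := by
    intro c A B
    rw [Matrix.sub_mul, Matrix.trace_sub, Complex.sub_re, Matrix.smul_mul, Matrix.trace_smul,
      Complex.smul_re, smul_eq_mul]
  have e2 : ∀ (c : ℝ) (A B : Matrix I I ℂ), (((c • A - B) * K).trace).re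
      = c * ((A * K).trace).re - ((B * K).trace).re := by
    intro c A B
    rw [Matrix.sub_mul, Matrix.trace_sub, Complex.sub_re, Matrix.smul_mul, Matrix.trace_smul,
      Complex.smul_re, smul_eq_mul]
  have p1 := psd_mul_trace_re_nonneg h1 hK
  have p2 := psd_mul_trace_re_nonneg h2 hK
  rw [e1] at p1
  rw [e2] at p2
  rw [abs_le]
  constructor <;> nlinarith [p1, p2]

end D
end St8

/-- comparison of proxy projected moments for two ensembles that are
`ε`-close in relative error up to the `2k`-th moment. -/
theorem statement8 (DA DB k : ℕ) (ε : ℝ) (hε : 0 ≤ ε)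
    (ν₁ ν₂ : Measure (Fin DA × Fin DB → ℂ))
    (hp₁ : IsProbabilityMeasure ν₁) (hp₂ : IsProbabilityMeasure ν₂)
    (hs₁ : ν₁ {Ψ | nsq Ψ = 1} = 1) (hs₂ : ν₂ {Ψ | nsq Ψ = 1} = 1)
    (hrel₁ : (ensMoment (2 * k) ν₂ - (1 - ε) • ensMoment (2 * k) ν₁).PosSemidef)
    (hrel₂ : ((1 + ε) • ensMoment (2 * k) ν₁ - ensMoment (2 * k) ν₂).PosSemidef)
    (e : Fin DB → (Fin DB → ℂ)) (he : OrthonormalFam e)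
    (q : Fin DB → ℝ) (hq : ∀ z, 0 < q z)
    (M : Matrix (Fin k → Fin DA) (Fin k → Fin DA) ℂ) (hM : M.PosSemidef) :
    |(∫ Ψ, schatten 2
          ((∑ z, ((q z : ℂ) ^ (k - 1))⁻¹ • tpow k (proj (projVec (e z) Ψ))) - M) ^ 2 ∂ν₁) -
        ∫ Ψ, schatten 2
          ((∑ z, ((q z : ℂ) ^ (k - 1))⁻¹ • tpow k (proj (projVec (e z) Ψ))) - M) ^ 2 ∂ν₂|
      ≤ ε * ∫ Ψ,
          (2 * ((∑ z, ((q z : ℂ) ^ (k - 1))⁻¹ • tpow k (proj (projVec (e z) Ψ))) * M).trace.re +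
            (∑ z, 1 / q z ^ (k - 1) * (nsq (projVec (e z) Ψ)).re ^ k) ^ 2) ∂ν₁ := by
  classical
  haveI := hp₁
  haveI := hp₂
  -- cast lemmas for the coefficients
  have hc : ∀ z, ((q z : ℂ) ^ (k - 1))⁻¹ = (((q z ^ (k - 1))⁻¹ : ℝ) : ℂ) := fun z => by
    rw [← Complex.ofReal_pow, ← Complex.ofReal_inv]
  have hcnn : ∀ z, (0 : ℝ) ≤ (q z ^ (k - 1))⁻¹ := fun z => by
    have := (hq z).le
    positivity
  -- the kernels
  set K1 : Matrix (Fin (2 * k) → Fin DA × Fin DB) (Fin (2 * k) → Fin DA × Fin DB) ℂ :=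
    ∑ z, ((q z : ℂ) ^ (k - 1))⁻¹ •
      ((St8.Emat DA DB k e z)ᴴ * St8.MIdK (β := Fin k → Fin DA × Fin DB) M * St8.Emat DA DB k e z) with hK1def
  set K2p : Matrix (Fin (2 * k) → Fin DA × Fin DB) (Fin (2 * k) → Fin DA × Fin DB) ℂ :=
    ∑ z, ∑ z', (((q z : ℂ) ^ (k - 1))⁻¹ * ((q z' : ℂ) ^ (k - 1))⁻¹) •
      ((St8.Gmat DA DB k e z z')ᴴ * St8.Ppos (Fin k → Fin DA) * St8.Gmat DA DB k e z z')
    with hK2pdef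
  set K2m : Matrix (Fin (2 * k) → Fin DA × Fin DB) (Fin (2 * k) → Fin DA × Fin DB) ℂ :=
    ∑ z, ∑ z', (((q z : ℂ) ^ (k - 1))⁻¹ * ((q z' : ℂ) ^ (k - 1))⁻¹) •
      ((St8.Gmat DA DB k e z z')ᴴ * St8.Pneg (Fin k → Fin DA) * St8.Gmat DA DB k e z z')
    with hK2mdef
  have hK1psd : K1.PosSemidef := St8.posSemidef_sum fun z _ => by
    rw [hc]
    exact St8.posSemidef_ofReal_smul
      ((St8.MIdK_posSemidef hM).conjTranspose_mul_mul_same _) (hcnn z)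
  have hK2ppsd : K2p.PosSemidef := St8.posSemidef_sum fun z _ =>
    St8.posSemidef_sum fun z' _ => by
      rw [hc, hc, ← Complex.ofReal_mul]
      exact St8.posSemidef_ofReal_smul
        (St8.Ppos_posSemidef.conjTranspose_mul_mul_same _) (mul_nonneg (hcnn z) (hcnn z'))
  have hK2mpsd : K2m.PosSemidef := St8.posSemidef_sum fun z _ =>
    St8.posSemidef_sum fun z' _ => by
      rw [hc, hc, ← Complex.ofReal_mul]
      exact St8.posSemidef_ofReal_smul
        (St8.Pneg_posSemidef.conjTranspose_mul_mul_same _) (mul_nonneg (hcnn z) (hcnn z'))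
  -- pointwise trace identity for K1
  have htrK1 : ∀ Ψ : Fin DA × Fin DB → ℂ,
      (tpow (2 * k) (proj Ψ) * K1).trace
        = (∑ z, ((q z : ℂ) ^ (k - 1))⁻¹ *
            (star (vpow k (projVec (e z) Ψ)) ⬝ᵥ M *ᵥ vpow k (projVec (e z) Ψ))) * nsq Ψ ^ k := by
    intro Ψ
    rw [St8.tpow_proj, hK1def, Finset.mul_sum, Matrix.trace_sum, Finset.sum_mul]
    refine Finset.sum_congr rfl fun z _ => ?_
    rw [Matrix.mul_smul, Matrix.trace_smul, St8.trace_proj_conj, St8.Emat_mulVec,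
      St8.MIdK_mulVec, St8.dot_tensor, St8.dot_vpow, smul_eq_mul,
      show nsq Ψ = star Ψ ⬝ᵥ Ψ from rfl]
    ring
  -- pointwise trace identity for the G kernels
  have htrG : ∀ (P : Matrix ((Fin k → Fin DA) × (Fin k → Fin DA))
        ((Fin k → Fin DA) × (Fin k → Fin DA)) ℂ) (Ψ : Fin DA × Fin DB → ℂ),
      (tpow (2 * k) (proj Ψ) * (∑ z, ∑ z',
          (((q z : ℂ) ^ (k - 1))⁻¹ * ((q z' : ℂ) ^ (k - 1))⁻¹) •
          ((St8.Gmat DA DB k e z z')ᴴ * P * St8.Gmat DA DB k e z z'))).trace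
        = ∑ z, ∑ z', (((q z : ℂ) ^ (k - 1))⁻¹ * ((q z' : ℂ) ^ (k - 1))⁻¹) *
            (star (fun p : (Fin k → Fin DA) × (Fin k → Fin DA) =>
                vpow k (projVec (e z) Ψ) p.1 * vpow k (projVec (e z') Ψ) p.2) ⬝ᵥ
              P *ᵥ (fun p => vpow k (projVec (e z) Ψ) p.1 * vpow k (projVec (e z') Ψ) p.2)) := by
    intro P Ψ
    rw [St8.tpow_proj, Finset.mul_sum, Matrix.trace_sum]
    refine Finset.sum_congr rfl fun z _ => ?_
    rw [Finset.mul_sum, Matrix.trace_sum]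
    refine Finset.sum_congr rfl fun z' _ => ?_
    rw [Matrix.mul_smul, Matrix.trace_smul, St8.trace_proj_conj, St8.Gmat_mulVec, smul_eq_mul]
  -- difference identity : K2p − K2m gives Tr(ρ̃²)
  have hXX : ∀ Ψ : Fin DA × Fin DB → ℂ,
      (tpow (2 * k) (proj Ψ) * K2p).trace - (tpow (2 * k) (proj Ψ) * K2m).trace
        = (((∑ z, ((q z : ℂ) ^ (k - 1))⁻¹ • tpow k (proj (projVec (e z) Ψ)))) *
            ((∑ z, ((q z : ℂ) ^ (k - 1))⁻¹ • tpow k (proj (projVec (e z) Ψ))))).trace := by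
    intro Ψ
    rw [hK2pdef, hK2mdef, htrG, htrG, ← Finset.sum_sub_distrib]
    simp only [St8.tpow_proj]
    rw [Finset.sum_mul_sum, Matrix.trace_sum]
    refine Finset.sum_congr rfl fun z _ => ?_
    rw [← Finset.sum_sub_distrib, Matrix.trace_sum]
    refine Finset.sum_congr rfl fun z' _ => ?_
    rw [← mul_sub, ← dotProduct_sub, ← Matrix.sub_mulVec, St8.Ppos_sub_Pneg,
      St8.Fswap_mulVec, St8.dot_tensor]
    rw [Matrix.smul_mul, Matrix.mul_smul, Matrix.trace_smul, Matrix.trace_smul,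
      St8.trace_proj_mul, St8.proj_mulVec, dotProduct_smul]
    simp only [smul_eq_mul]
    ring
  -- sum identity : K2p + K2m gives (Tr ρ̃)²
  have hSS : ∀ Ψ : Fin DA × Fin DB → ℂ,
      (tpow (2 * k) (proj Ψ) * K2p).trace + (tpow (2 * k) (proj Ψ) * K2m).trace
        = (((∑ z, 1 / q z ^ (k - 1) * (nsq (projVec (e z) Ψ)).re ^ k) ^ 2 : ℝ) : ℂ) := by
    intro Ψ
    rw [hK2pdef, hK2mdef, htrG, htrG, ← Finset.sum_add_distrib]
    have : (((∑ z, 1 / q z ^ (k - 1) * (nsq (projVec (e z) Ψ)).re ^ k) ^ 2 : ℝ) : ℂ)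
        = ∑ z, ∑ z', (((q z : ℂ) ^ (k - 1))⁻¹ * ((q z' : ℂ) ^ (k - 1))⁻¹) *
            (((nsq (projVec (e z) Ψ)).re : ℂ) ^ k * ((nsq (projVec (e z') Ψ)).re : ℂ) ^ k) := by
      rw [sq]
      push_cast
      rw [Finset.sum_mul_sum]
      exact Finset.sum_congr rfl fun z _ => Finset.sum_congr rfl fun z' _ => by ring
    rw [this]
    refine Finset.sum_congr rfl fun z _ => ?_
    rw [← Finset.sum_add_distrib]
    refine Finset.sum_congr rfl fun z' _ => ?_
    rw [← mul_add, ← dotProduct_add, ← Matrix.add_mulVec, St8.Ppos_add_Pneg,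
      Matrix.one_mulVec, St8.dot_tensor, St8.dot_vpow, St8.dot_vpow]
    congr 2
    · exact congrArg (· ^ k) (St8.nsq_ofReal_re (projVec (e z) Ψ))
    · exact congrArg (· ^ k) (St8.nsq_ofReal_re (projVec (e z') Ψ))
  -- ρ̃ M trace
  have hXM : ∀ Ψ : Fin DA × Fin DB → ℂ,
      ((∑ z, ((q z : ℂ) ^ (k - 1))⁻¹ • tpow k (proj (projVec (e z) Ψ))) * M).trace
        = ∑ z, ((q z : ℂ) ^ (k - 1))⁻¹ *
            (star (vpow k (projVec (e z) Ψ)) ⬝ᵥ M *ᵥ vpow k (projVec (e z) Ψ)) := by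
    intro Ψ
    simp only [St8.tpow_proj]
    rw [Finset.sum_mul, Matrix.trace_sum]
    refine Finset.sum_congr rfl fun z _ => ?_
    rw [Matrix.smul_mul, Matrix.trace_smul, St8.trace_proj_mul, smul_eq_mul]
  -- Hermitian property of ρ̃
  have hXh : ∀ Ψ : Fin DA × Fin DB → ℂ,
      (∑ z, ((q z : ℂ) ^ (k - 1))⁻¹ • tpow k (proj (projVec (e z) Ψ)))ᴴ
        = ∑ z, ((q z : ℂ) ^ (k - 1))⁻¹ • tpow k (proj (projVec (e z) Ψ)) := by
    intro Ψ
    rw [Matrix.conjTranspose_sum]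
    refine Finset.sum_congr rfl fun z _ => ?_
    rw [Matrix.conjTranspose_smul, St8.tpow_proj, St8.proj_conjTranspose, hc]
    rw [Complex.star_def, Complex.conj_ofReal]
  -- pointwise schatten identity
  have hsch : ∀ Ψ : Fin DA × Fin DB → ℂ, nsq Ψ = 1 →
      schatten 2 ((∑ z, ((q z : ℂ) ^ (k - 1))⁻¹ • tpow k (proj (projVec (e z) Ψ))) - M) ^ 2
        = ((tpow (2 * k) (proj Ψ) * K2p).trace).re - ((tpow (2 * k) (proj Ψ) * K2m).trace).re
          - 2 * ((tpow (2 * k) (proj Ψ) * K1).trace).re + ((M * M).trace).re := by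
    intro Ψ hΨ
    rw [St8.schatten_two_sq, Matrix.conjTranspose_sub, hXh, hM.1]
    have expand : (((∑ z, ((q z : ℂ) ^ (k - 1))⁻¹ • tpow k (proj (projVec (e z) Ψ))) - M) *
        ((∑ z, ((q z : ℂ) ^ (k - 1))⁻¹ • tpow k (proj (projVec (e z) Ψ))) - M)).trace
        = ((∑ z, ((q z : ℂ) ^ (k - 1))⁻¹ • tpow k (proj (projVec (e z) Ψ))) *
            (∑ z, ((q z : ℂ) ^ (k - 1))⁻¹ • tpow k (proj (projVec (e z) Ψ)))).trace
          - 2 * ((∑ z, ((q z : ℂ) ^ (k - 1))⁻¹ • tpow k (proj (projVec (e z) Ψ))) * M).trace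
          + (M * M).trace := by
      rw [Matrix.sub_mul, Matrix.mul_sub, Matrix.mul_sub, Matrix.trace_sub, Matrix.trace_sub,
        Matrix.trace_sub,
        Matrix.trace_mul_comm M (∑ z, ((q z : ℂ) ^ (k - 1))⁻¹ • tpow k (proj (projVec (e z) Ψ)))]
      ring
    rw [expand, ← hXX Ψ]
    have h1 : ((tpow (2 * k) (proj Ψ) * K1).trace)
        = ((∑ z, ((q z : ℂ) ^ (k - 1))⁻¹ • tpow k (proj (projVec (e z) Ψ))) * M).trace := by
      rw [htrK1, hXM, hΨ, one_pow, mul_one]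
    rw [← h1]
    simp only [Complex.add_re, Complex.sub_re, Complex.mul_re, Complex.re_ofNat,
      Complex.im_ofNat]
    ring
  -- integral identity for the LHS integrals
  have hIeq : ∀ (ν : Measure (Fin DA × Fin DB → ℂ)), IsProbabilityMeasure ν →
      ∀ _hs : ν {Ψ | nsq Ψ = 1} = 1,
      ∫ Ψ, schatten 2
          ((∑ z, ((q z : ℂ) ^ (k - 1))⁻¹ • tpow k (proj (projVec (e z) Ψ))) - M) ^ 2 ∂ν
        = ((ensMoment (2 * k) ν * K2p).trace).re - ((ensMoment (2 * k) ν * K2m).trace).re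
          - 2 * ((ensMoment (2 * k) ν * K1).trace).re + ((M * M).trace).re := by
    intro ν hp hs
    haveI := hp
    have i2p := St8.integrable_trace_kernel_re ν hs K2p
    have i2m := St8.integrable_trace_kernel_re ν hs K2m
    have i1 := St8.integrable_trace_kernel_re ν hs K1
    rw [integral_congr_ae ((St8.ae_sphere ν hs).mono fun Ψ hΨ => hsch Ψ hΨ)]
    have iB : Integrable (fun Ψ => ((tpow (2 * k) (proj Ψ) * K2p).trace).re
        - ((tpow (2 * k) (proj Ψ) * K2m).trace).re) ν := i2p.sub i2m
    have iC : Integrable (fun Ψ => 2 * ((tpow (2 * k) (proj Ψ) * K1).trace).re) ν :=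
      i1.const_mul 2
    have iA : Integrable (fun Ψ => ((tpow (2 * k) (proj Ψ) * K2p).trace).re
        - ((tpow (2 * k) (proj Ψ) * K2m).trace).re
        - 2 * ((tpow (2 * k) (proj Ψ) * K1).trace).re) ν := iB.sub iC
    rw [integral_add iA (integrable_const _), integral_sub iB iC, integral_sub i2p i2m,
      MeasureTheory.integral_const_mul,
      St8.integral_trace_kernel ν hs K2p, St8.integral_trace_kernel ν hs K2m,
      St8.integral_trace_kernel ν hs K1]
    simp
  -- integral identity for the RHS integral
  have hReq : ∫ Ψ, (2 * ((∑ z, ((q z : ℂ) ^ (k - 1))⁻¹ • tpow k (proj (projVec (e z) Ψ))) *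
          M).trace.re +
          (∑ z, 1 / q z ^ (k - 1) * (nsq (projVec (e z) Ψ)).re ^ k) ^ 2) ∂ν₁
      = 2 * ((ensMoment (2 * k) ν₁ * K1).trace).re + (((ensMoment (2 * k) ν₁ * K2p).trace).re
          + ((ensMoment (2 * k) ν₁ * K2m).trace).re) := by
    have i2p := St8.integrable_trace_kernel_re ν₁ hs₁ K2p
    have i2m := St8.integrable_trace_kernel_re ν₁ hs₁ K2m
    have i1 := St8.integrable_trace_kernel_re ν₁ hs₁ K1
    have hae : ∀ᵐ Ψ ∂ν₁,
        (2 * ((∑ z, ((q z : ℂ) ^ (k - 1))⁻¹ • tpow k (proj (projVec (e z) Ψ))) * M).trace.re +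
          (∑ z, 1 / q z ^ (k - 1) * (nsq (projVec (e z) Ψ)).re ^ k) ^ 2)
        = 2 * ((tpow (2 * k) (proj Ψ) * K1).trace).re +
            (((tpow (2 * k) (proj Ψ) * K2p).trace).re
              + ((tpow (2 * k) (proj Ψ) * K2m).trace).re) := by
      filter_upwards [St8.ae_sphere ν₁ hs₁] with Ψ hΨ
      have h1 : ((tpow (2 * k) (proj Ψ) * K1).trace)
          = ((∑ z, ((q z : ℂ) ^ (k - 1))⁻¹ • tpow k (proj (projVec (e z) Ψ))) * M).trace := by
        rw [htrK1, hXM, hΨ, one_pow, mul_one]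
      have h2 : (∑ z, 1 / q z ^ (k - 1) * (nsq (projVec (e z) Ψ)).re ^ k) ^ 2
          = ((tpow (2 * k) (proj Ψ) * K2p).trace).re
            + ((tpow (2 * k) (proj Ψ) * K2m).trace).re := by
        have h3 := congrArg Complex.re (hSS Ψ)
        rw [Complex.add_re, Complex.ofReal_re] at h3
        exact h3.symm
      rw [h1, h2]
    rw [integral_congr_ae hae]
    have iC : Integrable (fun Ψ => 2 * ((tpow (2 * k) (proj Ψ) * K1).trace).re) ν₁ :=
      i1.const_mul 2
    have iD : Integrable (fun Ψ => ((tpow (2 * k) (proj Ψ) * K2p).trace).re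
        + ((tpow (2 * k) (proj Ψ) * K2m).trace).re) ν₁ := i2p.add i2m
    rw [integral_add iC iD, integral_add i2p i2m, MeasureTheory.integral_const_mul,
      St8.integral_trace_kernel ν₁ hs₁ K2p, St8.integral_trace_kernel ν₁ hs₁ K2m,
      St8.integral_trace_kernel ν₁ hs₁ K1]
  -- assemble
  rw [hIeq ν₁ hp₁ hs₁, hIeq ν₂ hp₂ hs₂, hReq]
  have b1 := St8.key_bound K1 hK1psd hrel₁ hrel₂
  have b2p := St8.key_bound K2p hK2ppsd hrel₁ hrel₂
  have b2m := St8.key_bound K2m hK2mpsd hrel₁ hrel₂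
  rw [abs_le] at b1 b2p b2m
  rw [abs_le]
  have hexp : ε * (2 * ((ensMoment (2 * k) ν₁ * K1).trace).re
      + (((ensMoment (2 * k) ν₁ * K2p).trace).re + ((ensMoment (2 * k) ν₁ * K2m).trace).re))
      = 2 * (ε * ((ensMoment (2 * k) ν₁ * K1).trace).re)
        + (ε * ((ensMoment (2 * k) ν₁ * K2p).trace).re)
        + (ε * ((ensMoment (2 * k) ν₁ * K2m).trace).re) := by ring
  rw [hexp]
  constructor
  · linarith [b1.1, b1.2, b2p.1, b2p.2, b2m.1, b2m.2]
  · linarith [b1.1, b1.2, b2p.1, b2p.2, b2m.1, b2m.2]
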